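/- arXiv:0812.3707 — 9 statements merged into one kernel-verified Lean document; each statement's English description precedes it below -/
import Mathlib

section
/- Let M be a symmetric real n×n matrix with zero diagonal and positive off-diagonal entries, and let P = I - (1/n)J where J is the all-ones matrix. If PMP is negative semidefinite, then there exist vectors x_1,...,x_n in ℝ^n such that M_{ij} = ‖x_i - x_j‖² for all i,j. -/
/-!
For `d = eᵢ - eⱼ` the coordinates sum to zero, so the centering matrix `P` fixes `d` on both
sides and `dᵀ (-½ PMP) d = -½ dᵀ M d = Mᵢⱼ`, using symmetry and the zero diagonal. The positive
semidefinite matrix `-½ PMP` is the Gram matrix of some vectors `xᵢ`, and the quadratic form of a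
Gram matrix at `eᵢ - eⱼ` is `‖xᵢ - xⱼ‖²`.
-/

open Matrix
open scoped ComplexOrder

namespace Matrix

variable {n R : Type*} [Fintype n] [CommRing R]

theorem of_one_mulVec_eq_zero {d : n → R} (hd : ∑ i, d i = 0) :
    (of fun _ _ ↦ 1 : Matrix n n R) *ᵥ d = 0 := by
  ext
  simp [mulVec, dotProduct, hd]

theorem vecMul_of_one_eq_zero {d : n → R} (hd : ∑ i, d i = 0) :
    d ᵥ* (of fun _ _ ↦ 1 : Matrix n n R) = 0 := by
  ext
  simp [vecMul, dotProduct, hd]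

theorem dotProduct_mul_mul_mulVec_of_mulVec_eq_self {P : Matrix n n R} {d : n → R}
    (hPd : P *ᵥ d = d) (hdP : d ᵥ* P = d) (A : Matrix n n R) :
    d ⬝ᵥ (P * A * P) *ᵥ d = d ⬝ᵥ A *ᵥ d := by
  rw [← mulVec_mulVec, hPd, ← mulVec_mulVec, dotProduct_mulVec, hdP]

variable [DecidableEq n]

theorem one_sub_smul_of_one_mulVec_eq_self (c : R) {d : n → R} (hd : ∑ i, d i = 0) :
    (1 - c • of fun _ _ ↦ 1 : Matrix n n R) *ᵥ d = d := by
  rw [sub_mulVec, one_mulVec, smul_mulVec, of_one_mulVec_eq_zero hd, smul_zero, sub_zero]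

theorem vecMul_one_sub_smul_of_one_eq_self (c : R) {d : n → R} (hd : ∑ i, d i = 0) :
    d ᵥ* (1 - c • of fun _ _ ↦ 1 : Matrix n n R) = d := by
  rw [vecMul_sub, vecMul_one, vecMul_smul, vecMul_of_one_eq_zero hd, smul_zero, sub_zero]

theorem single_sub_single_dotProduct_mulVec (A : Matrix n n R) (i j : n) :
    (Pi.single i 1 - Pi.single j 1) ⬝ᵥ A *ᵥ (Pi.single i 1 - Pi.single j 1) =
      A i i + A j j - A i j - A j i := by
  simp only [sub_dotProduct, mulVec_sub, dotProduct_sub, mulVec_single_one, single_dotProduct,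
    one_mul, col_apply]
  ring

theorem single_sub_single_dotProduct_gram_mulVec {E : Type*} [NormedAddCommGroup E]
    [InnerProductSpace ℝ E] (v : n → E) (i j : n) :
    (Pi.single i 1 - Pi.single j 1) ⬝ᵥ gram ℝ v *ᵥ (Pi.single i 1 - Pi.single j 1) =
      dist (v i) (v j) ^ 2 := by
  rw [← star_trivial (Pi.single i 1 - Pi.single j 1), star_dotProduct_gram_mulVec]
  simp [sub_smul, Finset.sum_sub_distrib, Pi.single_apply, dist_eq_norm]

theorem PosSemidef.exists_eq_gram {𝕜 : Type*} [RCLike 𝕜] {A : Matrix n n 𝕜}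
    (hA : A.PosSemidef) : ∃ v : n → EuclideanSpace 𝕜 n, A = gram 𝕜 v := by
  open scoped MatrixOrder Matrix.Norms.L2Operator in
  obtain ⟨B, rfl⟩ := CStarAlgebra.nonneg_iff_eq_star_mul_self.mp hA.nonneg
  refine ⟨fun j ↦ WithLp.toLp 2 fun i ↦ B i j, ?_⟩
  rw [gram_eq_conjTranspose_mul (EuclideanSpace.basisFun n 𝕜)]
  rfl

end Matrix

theorem stmt_0_general (n : ℕ) (M : Matrix (Fin n) (Fin n) ℝ)
    (hsymm : M.IsSymm)
    (hdiag : ∀ i, M i i = 0)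
    (P : Matrix (Fin n) (Fin n) ℝ)
    (hP : P = 1 - (n : ℝ)⁻¹ • (Matrix.of fun _ _ => (1 : ℝ)))
    (hnsd : (-(P * M * P)).PosSemidef) :
    ∃ x : Fin n → EuclideanSpace ℝ (Fin n),
      ∀ i j, M i j = dist (x i) (x j) ^ 2 := by
  obtain ⟨x, hx⟩ := (hnsd.smul (by norm_num : (0 : ℝ) ≤ 2⁻¹)).exists_eq_gram
  refine ⟨x, fun i j ↦ ?_⟩
  set d : Fin n → ℝ := Pi.single i 1 - Pi.single j 1
  have hd : ∑ k, d k = 0 := by simp [d]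
  have hPd : P *ᵥ d = d := hP ▸ one_sub_smul_of_one_mulVec_eq_self _ hd
  have hdP : d ᵥ* P = d := hP ▸ vecMul_one_sub_smul_of_one_eq_self _ hd
  calc M i j = -2⁻¹ * (d ⬝ᵥ M *ᵥ d) := by
        rw [single_sub_single_dotProduct_mulVec, hdiag, hdiag, hsymm.apply i j]
        ring
    _ = d ⬝ᵥ ((2⁻¹ : ℝ) • -(P * M * P)) *ᵥ d := by
        rw [smul_mulVec, neg_mulVec, dotProduct_smul, dotProduct_neg,
          dotProduct_mul_mul_mulVec_of_mulVec_eq_self hPd hdP]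
        simp only [smul_eq_mul]
        ring
    _ = dist (x i) (x j) ^ 2 := by rw [hx, single_sub_single_dotProduct_gram_mulVec]

theorem stmt_0 (n : ℕ) (hn : 0 < n) (M : Matrix (Fin n) (Fin n) ℝ)
    (hsymm : M.IsSymm)
    (hdiag : ∀ i, M i i = 0)
    (hoff : ∀ i j, i ≠ j → 0 < M i j)
    (P : Matrix (Fin n) (Fin n) ℝ)
    (hP : P = 1 - (n : ℝ)⁻¹ • (Matrix.of fun _ _ => (1 : ℝ)))
    (hnsd : (-(P * M * P)).PosSemidef) :
    ∃ x : Fin n → EuclideanSpace ℝ (Fin n),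
      ∀ i j, M i j = dist (x i) (x j) ^ 2 :=
  stmt_0_general n M hsymm hdiag P hP hnsd
end

section
/- Let M be a symmetric real n×n matrix with zero diagonal, and suppose M is the squared-distance matrix of points x_1,...,x_n in ℝ^m (i.e., M_{ij} = ‖x_i - x_j‖²). Then PMP is negative semidefinite, where P = I - (1/n)J. -/
open Matrix RealInnerProductSpace

/-!
Expanding `‖xᵢ - xⱼ‖² = ‖xᵢ‖² + ‖xⱼ‖² - 2⟪xᵢ, xⱼ⟫` writes the squared-distance matrix as
`d 1ᵀ + 1 dᵀ - 2 G` with `G` the Gram matrix of the points. The centering matrix `P` is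
symmetric and kills the all-ones vector on both sides, so `P M P = -2 P G P`, and `P G P = Pᵀ G P`
is positive semidefinite because `G` is.
-/

namespace Matrix

variable {ι : Type*} {E : Type*} [NormedAddCommGroup E] [InnerProductSpace ℝ E]

def sqDistMatrix (v : ι → E) : Matrix ι ι ℝ := of fun i j => dist (v i) (v j) ^ 2

theorem sqDistMatrix_eq_vecMulVec_add_vecMulVec_sub_gram (v : ι → E) :
    sqDistMatrix v = vecMulVec (fun i => ‖v i‖ ^ 2) 1 + vecMulVec 1 (fun i => ‖v i‖ ^ 2)
      - (2 : ℝ) • gram ℝ v := by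
  ext i j
  simp only [sqDistMatrix, of_apply, dist_eq_norm, norm_sub_sq_real, add_apply, sub_apply,
    smul_apply, vecMulVec_apply, gram_apply, Pi.one_apply, smul_eq_mul]
  ring

def centeringMatrix (ι K : Type*) [Fintype ι] [DecidableEq ι] [Field K] : Matrix ι ι K :=
  1 - (Fintype.card ι : K)⁻¹ • of fun _ _ => 1

variable [Fintype ι] [DecidableEq ι]

section centeringMatrix

variable {K : Type*} [Field K]

theorem transpose_centeringMatrix : (centeringMatrix ι K)ᵀ = centeringMatrix ι K := by
  simp only [centeringMatrix, transpose_sub, transpose_one, transpose_smul]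
  rfl

variable [CharZero K]

theorem centeringMatrix_mulVec_one : centeringMatrix ι K *ᵥ 1 = 0 := by
  rcases isEmpty_or_nonempty ι with hι | hι
  · exact Subsingleton.elim _ _
  ext i
  simp [centeringMatrix, mulVec, dotProduct, one_apply]

theorem one_vecMul_centeringMatrix : 1 ᵥ* centeringMatrix ι K = 0 := by
  rw [← mulVec_transpose, transpose_centeringMatrix, centeringMatrix_mulVec_one]

end centeringMatrix

theorem centeringMatrix_mul_sqDistMatrix_mul_centeringMatrix (v : ι → E) :
    centeringMatrix ι ℝ * sqDistMatrix v * centeringMatrix ι ℝ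
      = (-2 : ℝ) • (centeringMatrix ι ℝ * gram ℝ v * centeringMatrix ι ℝ) := by
  set C := centeringMatrix ι ℝ
  have hleft : C * vecMulVec (fun i => ‖v i‖ ^ 2) 1 * C = 0 := by
    rw [Matrix.mul_assoc, vecMulVec_mul, one_vecMul_centeringMatrix, vecMulVec_zero,
      Matrix.mul_zero]
  have hright : C * vecMulVec 1 (fun i => ‖v i‖ ^ 2) * C = 0 := by
    rw [mul_vecMulVec, centeringMatrix_mulVec_one, zero_vecMulVec, Matrix.zero_mul]
  rw [sqDistMatrix_eq_vecMulVec_add_vecMulVec_sub_gram, Matrix.mul_sub, Matrix.mul_add, Matrix.sub_mul, Matrix.add_mul, hleft,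
    hright, Matrix.mul_smul, Matrix.smul_mul, zero_add, zero_sub, neg_smul]

theorem posSemidef_neg_centeringMatrix_mul_sqDistMatrix_mul_centeringMatrix (v : ι → E) :
    (-(centeringMatrix ι ℝ * sqDistMatrix v * centeringMatrix ι ℝ)).PosSemidef := by
  rw [centeringMatrix_mul_sqDistMatrix_mul_centeringMatrix, ← neg_smul, neg_neg]
  have hC : (centeringMatrix ι ℝ)ᴴ = centeringMatrix ι ℝ :=
    (conjTranspose_eq_transpose_of_trivial _).trans transpose_centeringMatrix
  have := (posSemidef_gram ℝ v).conjTranspose_mul_mul_same (centeringMatrix ι ℝ)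
  rw [hC] at this
  exact this.smul zero_le_two

end Matrix

theorem stmt_1_general (n m : ℕ) (M : Matrix (Fin n) (Fin n) ℝ)
    (x : Fin n → EuclideanSpace ℝ (Fin m))
    (hM : ∀ i j, M i j = dist (x i) (x j) ^ 2)
    (P : Matrix (Fin n) (Fin n) ℝ)
    (hP : P = 1 - (n : ℝ)⁻¹ • (Matrix.of fun _ _ => (1 : ℝ))) :
    (-(P * M * P)).PosSemidef := by
  have hM : M = sqDistMatrix x := Matrix.ext hM
  have hP : P = centeringMatrix (Fin n) ℝ := by simp [hP, centeringMatrix]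
  subst hM hP
  exact posSemidef_neg_centeringMatrix_mul_sqDistMatrix_mul_centeringMatrix x

theorem stmt_1 (n m : ℕ) (M : Matrix (Fin n) (Fin n) ℝ)
    (hsymm : M.IsSymm)
    (hdiag : ∀ i, M i i = 0)
    (x : Fin n → EuclideanSpace ℝ (Fin m))
    (hM : ∀ i j, M i j = dist (x i) (x j) ^ 2)
    (P : Matrix (Fin n) (Fin n) ℝ)
    (hP : P = 1 - (n : ℝ)⁻¹ • (Matrix.of fun _ _ => (1 : ℝ))) :
    (-(P * M * P)).PosSemidef :=
  stmt_1_general n m M x hM P hP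
end

section
/- Let M be a symmetric real n×n matrix with zero diagonal and positive off-diagonal entries, and let v ∈ ℝ^n be a vector with v^T𝟙 = 1. Then M is a Euclidean distance matrix (i.e., M_{ij} = ‖x_i - x_j‖² for some points x_i) if and only if F := (I - 𝟙v^T) M (I - v𝟙^T) is negative semidefinite. -/
/-!
Write `P = I - 𝟙vᵀ`, so `F = P M Pᵀ` and `P 𝟙 = 0` because `vᵀ𝟙 = 1`. The map `edmOfGram`,
`κ(G)ᵢⱼ = Gᵢᵢ + Gⱼⱼ - Gᵢⱼ - Gⱼᵢ` sends a Gram matrix to its matrix of squared distances, is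
linear, and vanishes on the rank-one matrices `a𝟙ᵀ` and `𝟙bᵀ`; these are exactly the terms that
conjugation by `P` kills, resp. creates. Hence if `M = κ(G)` with `G` a Gram matrix, then
`-F = P (G + Gᵀ) Pᵀ` is positive semidefinite; conversely, if `-F` is positive semidefinite then
`-F/2` is a Gram matrix `G`, and `κ(G) = -κ(F)/2 = -κ(M)/2 = M` since `M` is symmetric with zero
diagonal.
-/

open Matrix

namespace Matrix

variable {ι R : Type*} [CommRing R]

def edmOfGram : Matrix ι ι R →ₗ[R] Matrix ι ι R where
  toFun G := of fun i j => G i i + G j j - G i j - G j i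
  map_add' G H := by ext; simp only [of_apply, add_apply]; ring
  map_smul' c G := by ext; simp only [of_apply, smul_apply, smul_eq_mul, RingHom.id_apply]; ring

@[simp]
lemma edmOfGram_apply (G : Matrix ι ι R) (i j : ι) :
    edmOfGram G i j = G i i + G j j - G i j - G j i := rfl

lemma edmOfGram_vecMulVec_one_right (a : ι → R) : edmOfGram (vecMulVec a 1) = 0 := by
  ext; simp only [edmOfGram_apply, vecMulVec_apply, Pi.one_apply, mul_one, zero_apply]; ring

lemma edmOfGram_vecMulVec_one_left (b : ι → R) : edmOfGram (vecMulVec 1 b) = 0 := by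
  ext; simp only [edmOfGram_apply, vecMulVec_apply, Pi.one_apply, one_mul, zero_apply]; ring

lemma edmOfGram_eq (G : Matrix ι ι R) :
    edmOfGram G = vecMulVec G.diag 1 + vecMulVec 1 G.diag - (G + Gᵀ) := by
  ext
  simp only [edmOfGram_apply, sub_apply, add_apply, vecMulVec_apply, diag_apply, Pi.one_apply,
    mul_one, one_mul, transpose_apply]
  ring

lemma edmOfGram_of_isSymm {M : Matrix ι ι R} (hM : M.IsSymm) (hdiag : ∀ i, M i i = 0) :
    edmOfGram M = (-2 : R) • M := by
  ext i j
  simp only [edmOfGram_apply, hdiag, add_zero, zero_sub, hM.apply i j, smul_apply, smul_eq_mul,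
    neg_mul]
  ring

lemma mul_edmOfGram_mul_transpose [Fintype ι] {κ : Type*} {P : Matrix κ ι R} (hP : P *ᵥ 1 = 0)
    (G : Matrix ι ι R) : P * edmOfGram G * Pᵀ = -(P * (G + Gᵀ) * Pᵀ) := by
  rw [edmOfGram_eq, Matrix.mul_sub, Matrix.sub_mul, Matrix.mul_add, Matrix.add_mul,
    mul_vecMulVec, vecMulVec_mul, mul_vecMulVec, vecMulVec_mul, vecMul_transpose, hP]
  simp

lemma edmOfGram_one_sub_vecMulVec_mul_mul [Fintype ι] [DecidableEq ι] (v : ι → R)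
    (M : Matrix ι ι R) :
    edmOfGram ((1 - vecMulVec 1 v) * M * (1 - vecMulVec v 1)) = edmOfGram M := by
  simp only [Matrix.sub_mul, Matrix.mul_sub, Matrix.one_mul, Matrix.mul_one, vecMulVec_mul,
    mul_vecMulVec, map_sub, edmOfGram_vecMulVec_one_left, edmOfGram_vecMulVec_one_right, sub_zero]

lemma one_sub_vecMulVec_mulVec_one [Fintype ι] [DecidableEq ι] {v : ι → R} (hv : ∑ i, v i = 1) :
    (1 - vecMulVec 1 v : Matrix ι ι R) *ᵥ 1 = 0 := by
  rw [sub_mulVec, one_mulVec, vecMulVec_mulVec, dotProduct_one, hv]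
  simp

end Matrix

lemma dist_sq_eq_edmOfGram_gram {ι E : Type*} [NormedAddCommGroup E] [InnerProductSpace ℝ E]
    (x : ι → E) (i j : ι) : dist (x i) (x j) ^ 2 = edmOfGram (gram ℝ x) i j := by
  simp only [edmOfGram_apply, gram_apply, real_inner_self_eq_norm_sq, dist_eq_norm,
    norm_sub_sq_real, real_inner_comm (x i)]
  ring

open scoped ComplexOrder MatrixOrder in
lemma Matrix.PosSemidef.exists_eq_gram_s3 {ι 𝕜 : Type*} [Fintype ι] [RCLike 𝕜]
    {K : Matrix ι ι 𝕜} (hK : K.PosSemidef) : ∃ y : ι → EuclideanSpace 𝕜 ι, K = gram 𝕜 y := by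
  classical
  obtain ⟨B, rfl⟩ := CStarAlgebra.nonneg_iff_eq_star_mul_self.mp hK.nonneg
  refine ⟨fun i => WithLp.toLp 2 fun k => B k i, ?_⟩
  ext i j
  simp [mul_apply, gram_apply, PiLp.inner_apply, mul_comm]

theorem stmt_3_general (n : ℕ) (M : Matrix (Fin n) (Fin n) ℝ)
    (hsymm : M.IsSymm)
    (hdiag : ∀ i, M i i = 0)
    (v : Fin n → ℝ) (hv : ∑ i, v i = 1)
    (F : Matrix (Fin n) (Fin n) ℝ)
    (hF : F = (1 - Matrix.vecMulVec (fun _ => (1 : ℝ)) v) * M *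
              (1 - Matrix.vecMulVec v (fun _ => (1 : ℝ)))) :
    (∃ (m : ℕ) (x : Fin n → EuclideanSpace ℝ (Fin m)),
        ∀ i j, M i j = dist (x i) (x j) ^ 2) ↔ (-F).PosSemidef := by
  rw [← Pi.one_def] at hF
  constructor
  · rintro ⟨m, x, hx⟩
    have hM : M = edmOfGram (gram ℝ x) :=
      ext fun i j => (hx i j).trans (dist_sq_eq_edmOfGram_gram x i j)
    have hF' : -F = (1 - vecMulVec 1 v) * (gram ℝ x + (gram ℝ x)ᵀ) * (1 - vecMulVec 1 v)ᴴ := by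
      rw [conjTranspose_eq_transpose_of_trivial, ← neg_inj, neg_neg,
        ← mul_edmOfGram_mul_transpose (one_sub_vecMulVec_mulVec_one hv), ← hM, hF]
      simp only [transpose_sub, transpose_one, transpose_vecMulVec]
    rw [hF']
    exact ((posSemidef_gram ℝ x).add (posSemidef_gram ℝ x).transpose).mul_mul_conjTranspose_same _
  · intro hF_psd
    obtain ⟨y, hy⟩ := (hF_psd.smul (inv_nonneg.mpr zero_le_two : (0 : ℝ) ≤ 2⁻¹)).exists_eq_gram_s3
    refine ⟨n, y, fun i j => ?_⟩
    rw [dist_sq_eq_edmOfGram_gram, ← hy, map_smul, map_neg, hF,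
      edmOfGram_one_sub_vecMulVec_mul_mul, edmOfGram_of_isSymm hsymm hdiag, ← neg_smul, neg_neg,
      inv_smul_smul₀ two_ne_zero]

theorem stmt_3 (n : ℕ) (M : Matrix (Fin n) (Fin n) ℝ)
    (hsymm : M.IsSymm)
    (hdiag : ∀ i, M i i = 0)
    (hoff : ∀ i j, i ≠ j → 0 < M i j)
    (v : Fin n → ℝ) (hv : ∑ i, v i = 1)
    (F : Matrix (Fin n) (Fin n) ℝ)
    (hF : F = (1 - Matrix.vecMulVec (fun _ => (1 : ℝ)) v) * M *
              (1 - Matrix.vecMulVec v (fun _ => (1 : ℝ)))) :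
    (∃ (m : ℕ) (x : Fin n → EuclideanSpace ℝ (Fin m)),
        ∀ i j, M i j = dist (x i) (x j) ^ 2) ↔ (-F).PosSemidef :=
  stmt_3_general n M hsymm hdiag v hv F hF
end

section
/- Let A be the adjacency matrix of a simple graph, let b > 1, and set X = (1-b)A - bI. If M = A + b(J - I - A) is a Euclidean distance matrix, then X has at most one positive eigenvalue. -/
/-!
Since `J v = 0` for `v` orthogonal to the all-ones vector `𝟙`, the quadratic form of
`X = M - bJ` agrees with that of the distance matrix `M` on `𝟙⟂`, where it equals
`-2 ‖∑ vᵢ xᵢ‖² ≤ 0`. Eigenvectors of two positive eigenvalues would span a plane on which `X` is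
positive definite, and this plane meets the hyperplane `𝟙⟂`.
-/

open Matrix

theorem dotProduct_mulVec_dist_sq_eq {ι E : Type*} [Fintype ι] [NormedAddCommGroup E]
    [InnerProductSpace ℝ E] (x : ι → E) {v : ι → ℝ} (hv : ∑ i, v i = 0) :
    v ⬝ᵥ (of (fun i j => dist (x i) (x j) ^ 2) *ᵥ v) = -2 * ‖∑ i, v i • x i‖ ^ 2 := by
  rw [← real_inner_self_eq_norm_sq, inner_sum_smul_sum_smul_of_sum_eq_zero x hv x hv]
  simp only [dotProduct, mulVec, of_apply, Finset.mul_sum, dist_eq_norm, ← sq]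
  ring_nf
  exact Finset.sum_congr rfl fun i _ => Finset.sum_congr rfl fun j _ => by ring

theorem exists_ne_zero_mul_add_mul_eq_zero (a b : ℝ) :
    ∃ α β : ℝ, (α ≠ 0 ∨ β ≠ 0) ∧ α * a + β * b = 0 := by
  by_cases ha : a = 0
  · exact ⟨1, 0, .inl one_ne_zero, by simp [ha]⟩
  · exact ⟨b, -a, .inr (neg_ne_zero.mpr ha), by ring⟩

namespace Matrix.IsHermitian

variable {ι : Type*} [Fintype ι] [DecidableEq ι] {X : Matrix ι ι ℝ}

theorem dotProduct_eigenvectorBasis (hX : X.IsHermitian) (i j : ι) :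
    ⇑(hX.eigenvectorBasis i) ⬝ᵥ ⇑(hX.eigenvectorBasis j) = if i = j then 1 else 0 := by
  simpa [EuclideanSpace.inner_eq_star_dotProduct, eq_comm] using
    orthonormal_iff_ite.mp hX.eigenvectorBasis.orthonormal j i

theorem dotProduct_mulVec_smul_eigenvectorBasis_add (hX : X.IsHermitian) {i j : ι} (hij : i ≠ j)
    (α β : ℝ) :
    (α • ⇑(hX.eigenvectorBasis i) + β • ⇑(hX.eigenvectorBasis j)) ⬝ᵥ
        (X *ᵥ (α • ⇑(hX.eigenvectorBasis i) + β • ⇑(hX.eigenvectorBasis j))) =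
      α ^ 2 * hX.eigenvalues i + β ^ 2 * hX.eigenvalues j := by
  simp only [mulVec_add, mulVec_smul, mulVec_eigenvectorBasis, dotProduct_add, add_dotProduct,
    smul_dotProduct, dotProduct_smul, hX.dotProduct_eigenvectorBasis, if_true, if_neg hij,
    if_neg hij.symm, smul_eq_mul]
  ring

theorem card_filter_eigenvalues_pos_le_one (hX : X.IsHermitian) (w : ι → ℝ)
    (hX_nonpos : ∀ v, w ⬝ᵥ v = 0 → v ⬝ᵥ (X *ᵥ v) ≤ 0) :
    (Finset.univ.filter fun i => 0 < hX.eigenvalues i).card ≤ 1 := by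
  refine Finset.card_le_one.mpr fun i hi j hj => by_contra fun hij => ?_
  simp only [Finset.mem_filter, Finset.mem_univ, true_and] at hi hj
  obtain ⟨α, β, hαβ, hw⟩ := exists_ne_zero_mul_add_mul_eq_zero
    (w ⬝ᵥ hX.eigenvectorBasis i) (w ⬝ᵥ hX.eigenvectorBasis j)
  have h_nonpos := hX_nonpos (α • ⇑(hX.eigenvectorBasis i) + β • ⇑(hX.eigenvectorBasis j))
    (by simpa only [dotProduct_add, dotProduct_smul, smul_eq_mul, mul_comm] using hw)
  rw [hX.dotProduct_mulVec_smul_eigenvectorBasis_add hij] at h_nonpos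
  rcases hαβ with hα | hβ
  · have : 0 < α ^ 2 := by positivity
    nlinarith [mul_nonneg (sq_nonneg β) hj.le]
  · have : 0 < β ^ 2 := by positivity
    nlinarith [mul_nonneg (sq_nonneg α) hi.le]

end Matrix.IsHermitian

theorem stmt_6_general (n : ℕ)
    (A : Matrix (Fin n) (Fin n) ℝ)
    (b : ℝ)
    (J : Matrix (Fin n) (Fin n) ℝ) (hJ : J = Matrix.of fun _ _ => (1 : ℝ))
    (X : Matrix (Fin n) (Fin n) ℝ) (hX : X = (1 - b) • A - b • (1 : Matrix (Fin n) (Fin n) ℝ))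
    (hXh : X.IsHermitian)
    (M : Matrix (Fin n) (Fin n) ℝ) (hM : M = A + b • (J - 1 - A))
    (hEDM : ∃ (m : ℕ) (x : Fin n → EuclideanSpace ℝ (Fin m)),
        ∀ i j, M i j = dist (x i) (x j) ^ 2) :
    (Finset.univ.filter fun i => 0 < hXh.eigenvalues i).card ≤ 1 := by
  obtain ⟨m, x, hx⟩ := hEDM
  have hM_dist : M = of fun i j => dist (x i) (x j) ^ 2 := by ext i j; exact hx i j
  have hXM : X = M - b • J := by rw [hX, hM]; module
  refine hXh.card_filter_eigenvalues_pos_le_one 1 fun v hv => ?_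
  rw [one_dotProduct] at hv
  have hJv : J *ᵥ v = 0 := by ext; simp [hJ, mulVec, dotProduct, hv]
  rw [hXM, sub_mulVec, smul_mulVec, hJv, smul_zero, sub_zero, hM_dist,
    dotProduct_mulVec_dist_sq_eq x hv]
  exact mul_nonpos_of_nonpos_of_nonneg (by norm_num) (sq_nonneg _)

theorem stmt_6 (n : ℕ) (G : SimpleGraph (Fin n)) [DecidableRel G.Adj]
    (A : Matrix (Fin n) (Fin n) ℝ) (hA : A = G.adjMatrix ℝ)
    (b : ℝ) (hb : 1 < b)
    (J : Matrix (Fin n) (Fin n) ℝ) (hJ : J = Matrix.of fun _ _ => (1 : ℝ))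
    (X : Matrix (Fin n) (Fin n) ℝ) (hX : X = (1 - b) • A - b • (1 : Matrix (Fin n) (Fin n) ℝ))
    (hXh : X.IsHermitian)
    (M : Matrix (Fin n) (Fin n) ℝ) (hM : M = A + b • (J - 1 - A))
    (hEDM : ∃ (m : ℕ) (x : Fin n → EuclideanSpace ℝ (Fin m)),
        ∀ i j, M i j = dist (x i) (x j) ^ 2) :
    (Finset.univ.filter fun i => 0 < hXh.eigenvalues i).card ≤ 1 :=
  stmt_6_general n A b J hJ X hX hXh M hM hEDM
end

section
/- Let A be the adjacency matrix of a simple graph whose second smallest distinct eigenvalue τ₂ satisfies τ₂ < -1. If b > 1 and M = A + b(J - I - A) is a Euclidean distance matrix, then b ≤ τ₂/(τ₂+1). -/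
/-!
For `v ⊥ 𝟙` the Gram expansion gives `vᵀ M v = -2 ‖∑ vᵢ xᵢ‖² ≤ 0` (Schoenberg), while `J v = 0`
gives `vᵀ M v = (1 - b) vᵀ A v - b vᵀ v`. Eigenvectors of the symmetric matrix `A` for `τ₁ < τ₂`
are orthogonal, so their span is a plane on which the Rayleigh quotient is at most `τ₂`, and it
meets `𝟙^⊥` nontrivially. Since `1 - b < 0` this yields `(1 - b) τ₂ ≤ b`, which rearranges to the
bound because `τ₂ + 1 < 0`.
-/

open Matrix

theorem sum_mul_dist_sq_eq_neg_two_mul_norm_sq {ι E : Type*} [Fintype ι]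
    [NormedAddCommGroup E] [InnerProductSpace ℝ E] (x : ι → E) {v : ι → ℝ}
    (hv : ∑ i, v i = 0) :
    ∑ i, ∑ j, v i * v j * dist (x i) (x j) ^ 2 = -2 * ‖∑ i, v i • x i‖ ^ 2 := by
  have gram : ‖∑ i, v i • x i‖ ^ 2 = ∑ i, ∑ j, v i * v j * inner ℝ (x i) (x j) := by
    simp only [← real_inner_self_eq_norm_sq, sum_inner, inner_sum, real_inner_smul_left,
      real_inner_smul_right]
    exact Finset.sum_congr rfl fun i _ => Finset.sum_congr rfl fun j _ => by
      rw [real_inner_comm]; ring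
  calc ∑ i, ∑ j, v i * v j * dist (x i) (x j) ^ 2
      = (∑ i, v i * ‖x i‖ ^ 2) * (∑ j, v j)
          - 2 * ∑ i, ∑ j, v i * v j * inner ℝ (x i) (x j)
          + (∑ i, v i) * ∑ j, v j * ‖x j‖ ^ 2 := by
        rw [Finset.sum_mul_sum, Finset.sum_mul_sum]
        simp only [Finset.mul_sum, ← Finset.sum_sub_distrib, ← Finset.sum_add_distrib]
        refine Finset.sum_congr rfl fun i _ => Finset.sum_congr rfl fun j _ => ?_
        rw [dist_eq_norm, norm_sub_sq_real]
        ring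
    _ = -2 * ‖∑ i, v i • x i‖ ^ 2 := by rw [hv, gram]; ring

theorem Matrix.dotProduct_mulVec_nonpos_of_sum_eq_zero {ι E : Type*} [Fintype ι]
    [NormedAddCommGroup E] [InnerProductSpace ℝ E] {M : Matrix ι ι ℝ} (x : ι → E)
    (hM : ∀ i j, M i j = dist (x i) (x j) ^ 2) {v : ι → ℝ} (hv : ∑ i, v i = 0) :
    v ⬝ᵥ (M *ᵥ v) ≤ 0 := by
  have hquad : v ⬝ᵥ (M *ᵥ v) = ∑ i, ∑ j, v i * v j * dist (x i) (x j) ^ 2 := by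
    simp only [dotProduct, mulVec, Finset.mul_sum, hM]
    exact Finset.sum_congr rfl fun i _ => Finset.sum_congr rfl fun j _ => by ring
  rw [hquad, sum_mul_dist_sq_eq_neg_two_mul_norm_sq x hv]
  nlinarith [sq_nonneg ‖∑ i, v i • x i‖]

section

variable {ι : Type*} [Fintype ι] {A : Matrix ι ι ℝ}

theorem Matrix.IsSymm.dotProduct_eq_zero_of_mulVec_eq_smul (hA : A.IsSymm) {μ ν : ℝ}
    (hμν : μ ≠ ν) {u w : ι → ℝ} (hu : A *ᵥ u = μ • u) (hw : A *ᵥ w = ν • w) :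
    u ⬝ᵥ w = 0 := by
  have h : μ * (u ⬝ᵥ w) = ν * (u ⬝ᵥ w) := by
    rw [← smul_eq_mul, ← smul_dotProduct, ← hu, ← smul_eq_mul, ← dotProduct_smul, ← hw,
      dotProduct_mulVec, ← mulVec_transpose, hA.eq]
  by_contra huw
  exact hμν (mul_right_cancel₀ huw h)

theorem Matrix.dotProduct_mulVec_le_of_orthogonal_eigenvectors {μ ν : ℝ} (hμν : μ ≤ ν)
    {u w : ι → ℝ} (hu : A *ᵥ u = μ • u) (hw : A *ᵥ w = ν • w) (huw : u ⬝ᵥ w = 0) (a c : ℝ) :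
    (a • u + c • w) ⬝ᵥ (A *ᵥ (a • u + c • w)) ≤ ν * ((a • u + c • w) ⬝ᵥ (a • u + c • w)) := by
  have hwu : w ⬝ᵥ u = 0 := by rw [dotProduct_comm, huw]
  simp only [mulVec_add, mulVec_smul, hu, hw, add_dotProduct, dotProduct_add, smul_dotProduct,
    dotProduct_smul, huw, hwu, smul_eq_mul]
  have hu₀ : 0 ≤ u ⬝ᵥ u := by simpa using dotProduct_star_self_nonneg u
  nlinarith [mul_nonneg (mul_nonneg (sq_nonneg a) hu₀) (sub_nonneg.2 hμν)]

theorem Matrix.IsSymm.exists_sum_eq_zero_dotProduct_mulVec_le (hA : A.IsSymm) {μ ν : ℝ}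
    (hμν : μ < ν) {u w : ι → ℝ} (hu₀ : u ≠ 0) (hw₀ : w ≠ 0) (hu : A *ᵥ u = μ • u)
    (hw : A *ᵥ w = ν • w) :
    ∃ v : ι → ℝ, v ≠ 0 ∧ ∑ i, v i = 0 ∧ v ⬝ᵥ (A *ᵥ v) ≤ ν * (v ⬝ᵥ v) := by
  have huw := hA.dotProduct_eq_zero_of_mulVec_eq_smul hμν.ne hu hw
  have bound := dotProduct_mulVec_le_of_orthogonal_eigenvectors hμν.le hu hw huw
  by_cases hsw : ∑ i, w i = 0
  · exact ⟨w, hw₀, hsw, by simpa using bound 0 1⟩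
  -- this vector lies in `𝟙^⊥`, and its `u`-component is nonzero since `u ⊥ w`
  refine ⟨(∑ i, w i) • u + (-∑ i, u i) • w, fun h => ?_, ?_, bound _ _⟩
  · have := congrArg (· ⬝ᵥ u) h
    simp only [add_dotProduct, smul_dotProduct, dotProduct_comm w u, huw, zero_dotProduct,
      smul_eq_mul, mul_zero, add_zero, mul_eq_zero, hsw, false_or, dotProduct_self_eq_zero] at this
    exact hu₀ this
  · simp only [Pi.add_apply, Pi.smul_apply, smul_eq_mul, Finset.sum_add_distrib, ← Finset.mul_sum]
    ring

theorem Matrix.dotProduct_mulVec_add_smul_compl_of_sum_eq_zero [DecidableEq ι] (b : ℝ)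
    {v : ι → ℝ} (hv : ∑ i, v i = 0) :
    v ⬝ᵥ ((A + b • (of (fun _ _ => 1) - 1 - A)) *ᵥ v)
      = (1 - b) * (v ⬝ᵥ (A *ᵥ v)) - b * (v ⬝ᵥ v) := by
  have hJv : (of fun _ _ => 1 : Matrix ι ι ℝ) *ᵥ v = 0 := by
    ext i
    simpa [mulVec, dotProduct] using hv
  rw [add_mulVec, smul_mulVec, sub_mulVec, sub_mulVec, hJv, one_mulVec, dotProduct_add,
    dotProduct_smul, dotProduct_sub, dotProduct_sub, dotProduct_zero, smul_eq_mul]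
  ring

end

theorem stmt_7_general (n : ℕ) (G : SimpleGraph (Fin n)) [DecidableRel G.Adj]
    (A : Matrix (Fin n) (Fin n) ℝ) (hA : A = G.adjMatrix ℝ)
    (τ₁ τ₂ : ℝ) (hlt : τ₁ < τ₂)
    (hτ₁eig : ∃ w ≠ 0, A *ᵥ w = τ₁ • w)
    (hτ₂eig : ∃ w ≠ 0, A *ᵥ w = τ₂ • w)
    (hτ₂ : τ₂ < -1)
    (b : ℝ) (hb : 1 < b)
    (J : Matrix (Fin n) (Fin n) ℝ) (hJ : J = Matrix.of fun _ _ => (1 : ℝ))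
    (M : Matrix (Fin n) (Fin n) ℝ) (hM : M = A + b • (J - 1 - A))
    (hEDM : ∃ (m : ℕ) (x : Fin n → EuclideanSpace ℝ (Fin m)),
        ∀ i j, M i j = dist (x i) (x j) ^ 2) :
    b ≤ τ₂ / (τ₂ + 1) := by
  obtain ⟨w₁, hw₁, he₁⟩ := hτ₁eig
  obtain ⟨w₂, hw₂, he₂⟩ := hτ₂eig
  obtain ⟨m, x, hx⟩ := hEDM
  have hsymm : A.IsSymm := hA ▸ G.isSymm_adjMatrix
  obtain ⟨v, hv₀, hvsum, hvA⟩ :=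
    hsymm.exists_sum_eq_zero_dotProduct_mulVec_le hlt hw₁ hw₂ he₁ he₂
  have hMv := dotProduct_mulVec_nonpos_of_sum_eq_zero x hx hvsum
  rw [hM, hJ, dotProduct_mulVec_add_smul_compl_of_sum_eq_zero b hvsum] at hMv
  have hv : 0 < v ⬝ᵥ v := by simpa using dotProduct_star_self_pos_iff.mpr hv₀
  have key : (1 - b) * τ₂ * (v ⬝ᵥ v) ≤ b * (v ⬝ᵥ v) := by
    nlinarith [mul_le_mul_of_nonpos_left hvA (by linarith : 1 - b ≤ 0)]
  have := le_of_mul_le_mul_right key hv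
  rw [le_div_iff_of_neg (by linarith)]
  linarith

theorem stmt_7 (n : ℕ) (G : SimpleGraph (Fin n)) [DecidableRel G.Adj]
    (A : Matrix (Fin n) (Fin n) ℝ) (hA : A = G.adjMatrix ℝ)
    (τ₁ τ₂ : ℝ) (hlt : τ₁ < τ₂)
    (hτ₁eig : ∃ w ≠ 0, A *ᵥ w = τ₁ • w)
    (hτ₂eig : ∃ w ≠ 0, A *ᵥ w = τ₂ • w)
    (hτ₁min : ∀ μ : ℝ, (∃ w ≠ 0, A *ᵥ w = μ • w) → τ₁ ≤ μ)
    (hτ₂second : ∀ μ : ℝ, (∃ w ≠ 0, A *ᵥ w = μ • w) → μ = τ₁ ∨ τ₂ ≤ μ)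
    (hτ₂ : τ₂ < -1)
    (b : ℝ) (hb : 1 < b)
    (J : Matrix (Fin n) (Fin n) ℝ) (hJ : J = Matrix.of fun _ _ => (1 : ℝ))
    (M : Matrix (Fin n) (Fin n) ℝ) (hM : M = A + b • (J - 1 - A))
    (hEDM : ∃ (m : ℕ) (x : Fin n → EuclideanSpace ℝ (Fin m)),
        ∀ i j, M i j = dist (x i) (x j) ^ 2) :
    b ≤ τ₂ / (τ₂ + 1) :=
  stmt_7_general n G A hA τ₁ τ₂ hlt hτ₁eig hτ₂eig hτ₂ b hb J hJ M hM hEDM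
end

section
/- Let X be a negative semidefinite symmetric real n×n matrix with null space N, and let P = I - (1/n)J. Then the rank of PXP equals n minus the dimension of the subspace ⟨𝟙⟩ + (N ∩ 𝟙^⊥); in particular rank(PXP) = n - dim(N) - 1 if N ⊆ 𝟙^⊥, and rank(PXP) = n - dim(N) if N ⊄ 𝟙^⊥. -/
/-!
For positive semidefinite `A` and any `B`, `vᴴ Bᴴ A B v = 0` forces `A (B v) = 0`, so
`ker (Bᴴ A B)` is the preimage of `ker A` under `B`. Applied to `A = -X` and the symmetric
projection `P` onto `𝟙^⊥` along `⟨𝟙⟩`, this gives `ker (P X P) = P⁻¹(N) = ⟨𝟙⟩ + (N ∩ 𝟙^⊥)`, and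
rank–nullity gives the formula. In the two special cases it remains to count dimensions:
`𝟙 ∉ N ∩ 𝟙^⊥`, and when `N ⊄ 𝟙^⊥` the space `N ∩ 𝟙^⊥` is a hyperplane in `N`.
-/

open Matrix Module LinearMap
open scoped ComplexOrder

theorem LinearMap.comap_eq_ker_sup_inf_range {R M : Type*} [Ring R] [AddCommGroup M] [Module R M]
    {f : M →ₗ[R] M} (hf : IsIdempotentElem f) (N : Submodule R M) :
    N.comap f = ker f ⊔ (N ⊓ range f) := by
  refine le_antisymm (fun v hv => ?_) (sup_le (fun v hv => ?_) fun v hv => ?_)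
  · have hfix : f (f v) = f v := hf.mem_range_iff.mp (mem_range_self f v)
    rw [← sub_add_cancel v (f v)]
    exact Submodule.add_mem_sup (by simp [hfix]) ⟨hv, mem_range_self f v⟩
  · simp [mem_ker.mp hv]
  · rw [Submodule.mem_comap, hf.mem_range_iff.mp hv.2]
    exact hv.1

theorem Module.Dual.finrank_inf_ker_add_one {K V : Type*} [Field K] [AddCommGroup V] [Module K V]
    [FiniteDimensional K V] {φ : Module.Dual K V} {N : Submodule K V} (h : ¬ N ≤ ker φ) :
    finrank K (N ⊓ ker φ : Submodule K V) + 1 = finrank K N := by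
  have hφN : φ.domRestrict N ≠ 0 := by
    obtain ⟨v, hvN, hv⟩ := SetLike.not_le_iff_exists.mp h
    exact fun h0 => hv (by simpa using LinearMap.congr_fun h0 ⟨v, hvN⟩)
  rw [← finrank_ker_add_one_of_ne_zero hφN, ker_domRestrict, ← Submodule.finrank_map_subtype_eq,
    Submodule.map_comap_subtype]

theorem Matrix.rank_add_finrank_ker {K m n : Type*} [Field K] [Fintype n] [Finite m]
    (A : Matrix m n K) : A.rank + finrank K (ker A.mulVecLin) = Fintype.card n := by
  rw [rank, finrank_range_add_finrank_ker, finrank_fintype_fun_eq_card]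

theorem Matrix.PosSemidef.ker_conjTranspose_mul_mul_same {𝕜 m n : Type*} [RCLike 𝕜] [Fintype m]
    [Fintype n] {A : Matrix n n 𝕜} (hA : A.PosSemidef) (B : Matrix n m 𝕜) :
    ker (Bᴴ * A * B).mulVecLin = (ker A.mulVecLin).comap B.mulVecLin := by
  ext v
  simp only [mem_ker, Submodule.mem_comap, mulVecLin_apply]
  rw [← (hA.conjTranspose_mul_mul_same B).dotProduct_mulVec_zero_iff,
    ← hA.dotProduct_mulVec_zero_iff, ← mulVec_mulVec, ← mulVec_mulVec, dotProduct_mulVec,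
    vecMul_conjTranspose, star_star]

theorem Matrix.ker_mulVecLin_neg {R m n : Type*} [CommRing R] [Fintype n] (A : Matrix m n R) :
    ker (-A).mulVecLin = ker A.mulVecLin := by
  ext v
  simp

section Centering

variable {n : ℕ}

def coordSum (n : ℕ) : Module.Dual ℝ (Fin n → ℝ) := ∑ i, LinearMap.proj i

@[simp]
theorem coordSum_apply (v : Fin n → ℝ) : coordSum n v = ∑ i, v i := by
  simp [coordSum]

theorem coordSum_one : coordSum n 1 = n := by
  simp

noncomputable def centering (n : ℕ) : Matrix (Fin n) (Fin n) ℝ := 1 - (n : ℝ)⁻¹ • of fun _ _ => 1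

theorem ker_mulVecLin_ones (hn : 0 < n) :
    ker (of fun _ _ => 1 : Matrix (Fin n) (Fin n) ℝ).mulVecLin = ker (coordSum n) := by
  have : Nonempty (Fin n) := ⟨⟨0, hn⟩⟩
  ext v
  simp [funext_iff, mulVec, dotProduct]

theorem centering_mulVec (v : Fin n → ℝ) :
    centering n *ᵥ v = v - ((n : ℝ)⁻¹ * coordSum n v) • 1 := by
  ext i
  simp [centering, mulVec, dotProduct, Finset.mul_sum, sub_mul, Finset.sum_sub_distrib, one_apply]

theorem coordSum_centering_mulVec (hn : 0 < n) (v : Fin n → ℝ) :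
    coordSum n (centering n *ᵥ v) = 0 := by
  have : (n : ℝ) ≠ 0 := by positivity
  rw [centering_mulVec, map_sub, map_smul, coordSum_one, smul_eq_mul, mul_comm, ← mul_assoc,
    mul_inv_cancel₀ this, one_mul, sub_self]

theorem centering_mulVec_of_mem_ker {v : Fin n → ℝ} (hv : v ∈ ker (coordSum n)) :
    centering n *ᵥ v = v := by
  simp [centering_mulVec, mem_ker.mp hv]

theorem isIdempotentElem_centering (hn : 0 < n) : IsIdempotentElem (centering n).mulVecLin :=
  LinearMap.ext fun v => centering_mulVec_of_mem_ker (coordSum_centering_mulVec hn v)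

theorem ker_centering (hn : 0 < n) : ker (centering n).mulVecLin = Submodule.span ℝ {1} := by
  ext v
  rw [mem_ker, mulVecLin_apply, centering_mulVec, sub_eq_zero, Submodule.mem_span_singleton]
  constructor
  · exact fun h => ⟨_, h.symm⟩
  · rintro ⟨c, rfl⟩
    have : (n : ℝ) ≠ 0 := by positivity
    rw [map_smul, coordSum_one, smul_eq_mul, mul_comm, mul_inv_cancel_right₀ this]

theorem range_centering (hn : 0 < n) : range (centering n).mulVecLin = ker (coordSum n) := by
  refine le_antisymm ?_ fun v hv => ⟨v, centering_mulVec_of_mem_ker hv⟩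
  rintro _ ⟨v, rfl⟩
  exact coordSum_centering_mulVec hn v

theorem conjTranspose_centering : (centering n)ᴴ = centering n := by
  ext i j
  simp [centering, one_apply, eq_comm]

theorem ker_centering_mul_mul_centering (hn : 0 < n) {X : Matrix (Fin n) (Fin n) ℝ}
    (hX : (-X).PosSemidef) :
    ker (centering n * X * centering n).mulVecLin
      = Submodule.span ℝ {1} ⊔ (ker X.mulVecLin ⊓ ker (coordSum n)) := by
  have h := hX.ker_conjTranspose_mul_mul_same (centering n)
  rw [conjTranspose_centering, mul_neg, neg_mul, ker_mulVecLin_neg, ker_mulVecLin_neg] at h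
  rw [h, comap_eq_ker_sup_inf_range (isIdempotentElem_centering hn), ker_centering hn,
    range_centering hn]

theorem finrank_span_one_sup (hn : 0 < n) {S : Submodule ℝ (Fin n → ℝ)}
    (hS : S ≤ ker (coordSum n)) :
    finrank ℝ (Submodule.span ℝ {1} ⊔ S : Submodule ℝ (Fin n → ℝ)) = finrank ℝ S + 1 := by
  rw [sup_comm]
  exact Submodule.finrank_sup_span_singleton fun h => by simpa [coordSum_one, hn.ne'] using hS h

end Centering

theorem stmt_9_general (n : ℕ) (hn : 0 < n)
    (X : Matrix (Fin n) (Fin n) ℝ)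
    (hnsd : (-X).PosSemidef)
    (N : Submodule ℝ (Fin n → ℝ)) (hN : N = LinearMap.ker (Matrix.mulVecLin X))
    (onesPerp : Submodule ℝ (Fin n → ℝ))
    (hperp : onesPerp = LinearMap.ker (Matrix.mulVecLin ((Matrix.of fun _ _ => (1 : ℝ)) : Matrix (Fin n) (Fin n) ℝ)))
    (P : Matrix (Fin n) (Fin n) ℝ)
    (hP : P = 1 - (n : ℝ)⁻¹ • (Matrix.of fun _ _ => (1 : ℝ))) :
    (P * X * P).rank
      = n - Module.finrank ℝ ((Submodule.span ℝ {(fun _ => (1 : ℝ) : Fin n → ℝ)} ⊔ (N ⊓ onesPerp) : Submodule ℝ (Fin n → ℝ)))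
    ∧ (N ≤ onesPerp → (P * X * P).rank = n - Module.finrank ℝ N - 1)
    ∧ (¬ N ≤ onesPerp → (P * X * P).rank = n - Module.finrank ℝ N) := by
  rw [ker_mulVecLin_ones hn] at hperp
  subst hN hperp
  have hrank : (P * X * P).rank = n - finrank ℝ (Submodule.span ℝ {1} ⊔
      (ker X.mulVecLin ⊓ ker (coordSum n)) : Submodule ℝ (Fin n → ℝ)) := by
    have hnullity := (centering n * X * centering n).rank_add_finrank_ker
    rw [ker_centering_mul_mul_centering hn hnsd, Fintype.card_fin] at hnullity
    rw [hP]
    exact Nat.eq_sub_of_add_eq hnullity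
  refine ⟨hrank, fun h => ?_, fun h => ?_⟩
  · rw [hrank, inf_eq_left.mpr h, finrank_span_one_sup hn h]
    omega
  · rw [hrank, finrank_span_one_sup hn inf_le_right, Dual.finrank_inf_ker_add_one h]

theorem stmt_9 (n : ℕ) (hn : 0 < n)
    (X : Matrix (Fin n) (Fin n) ℝ) (hsymm : X.IsSymm)
    (hnsd : (-X).PosSemidef)
    (N : Submodule ℝ (Fin n → ℝ)) (hN : N = LinearMap.ker (Matrix.mulVecLin X))
    (onesPerp : Submodule ℝ (Fin n → ℝ))
    (hperp : onesPerp = LinearMap.ker (Matrix.mulVecLin ((Matrix.of fun _ _ => (1 : ℝ)) : Matrix (Fin n) (Fin n) ℝ)))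
    (P : Matrix (Fin n) (Fin n) ℝ)
    (hP : P = 1 - (n : ℝ)⁻¹ • (Matrix.of fun _ _ => (1 : ℝ))) :
    (P * X * P).rank
      = n - Module.finrank ℝ ((Submodule.span ℝ {(fun _ => (1 : ℝ) : Fin n → ℝ)} ⊔ (N ⊓ onesPerp) : Submodule ℝ (Fin n → ℝ)))
    ∧ (N ≤ onesPerp → (P * X * P).rank = n - Module.finrank ℝ N - 1)
    ∧ (¬ N ≤ onesPerp → (P * X * P).rank = n - Module.finrank ℝ N) :=
  stmt_9_general n hn X hnsd N hN onesPerp hperp P hP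
end

section
/- Every simple graph that is not a disjoint union of complete graphs has an adjacency matrix eigenvalue strictly smaller than -1. -/
/-!
An induced path `u ~ v ~ w` (with `u ≁ w`) gives the test vector `x = e_u - e_v + e_w`, for which
`xᵀ A x = -4` while `xᵀ x = 3`. Its Rayleigh quotient `-4/3` is below `-1`, so the smallest
eigenvalue of `A` is too: if all eigenvalues were at least `c`, then `A - c • 1` would be positive
semidefinite by the spectral theorem.
-/

open Matrix
open scoped ComplexOrder

namespace Matrix.IsHermitian

variable {n 𝕜 : Type*} [Fintype n] [DecidableEq n] [RCLike 𝕜] {A : Matrix n n 𝕜}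

theorem posSemidef_sub_smul_one (hA : A.IsHermitian) {c : ℝ} (hc : ∀ i, c ≤ hA.eigenvalues i) :
    (A - (c : 𝕜) • 1).PosSemidef := by
  have hdiag : diagonal (RCLike.ofReal ∘ hA.eigenvalues) - (c : 𝕜) • 1 =
      diagonal (fun i ↦ ((hA.eigenvalues i - c : ℝ) : 𝕜)) := by
    rw [← diagonal_one, ← diagonal_smul, diagonal_sub]
    congr 1
    ext i
    simp
  rw [hA.spectral_theorem, ← map_one (Unitary.conjStarAlgAut 𝕜 _ hA.eigenvectorUnitary),
    ← map_smul, ← map_sub, hdiag, Unitary.conjStarAlgAut_apply,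
    Unitary.isUnit_coe.posSemidef_star_right_conjugate_iff, posSemidef_diagonal_iff]
  exact fun i ↦ RCLike.ofReal_nonneg.mpr (sub_nonneg.mpr (hc i))

theorem ofLp_eigenvectorBasis_ne_zero (hA : A.IsHermitian) (i : n) :
    (hA.eigenvectorBasis i : n → 𝕜) ≠ 0 := by
  simpa using hA.eigenvectorBasis.orthonormal.ne_zero i

theorem exists_eigenvector_of_re_dotProduct_mulVec_lt (hA : A.IsHermitian) {c : ℝ} {x : n → 𝕜}
    (hx : RCLike.re (star x ⬝ᵥ (A *ᵥ x)) < c * RCLike.re (star x ⬝ᵥ x)) :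
    ∃ μ < c, ∃ y ≠ 0, A *ᵥ y = μ • y := by
  by_contra! h
  have hc : ∀ i, c ≤ hA.eigenvalues i := fun i ↦ le_of_not_gt fun hi ↦
    h _ hi _ (hA.ofLp_eigenvectorBasis_ne_zero i) (hA.mulVec_eigenvectorBasis i)
  have hpsd := (hA.posSemidef_sub_smul_one hc).re_dotProduct_nonneg x
  rw [sub_mulVec, dotProduct_sub, smul_mulVec, one_mulVec, dotProduct_smul, smul_eq_mul,
    map_sub, RCLike.re_ofReal_mul, sub_nonneg] at hpsd
  exact hpsd.not_gt hx

end Matrix.IsHermitian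

variable {V R : Type*} [Fintype V] [DecidableEq V] [Ring R] {u v w : V}

theorem dotProduct_self_single_sub_single_add_single (huv : u ≠ v) (hvw : v ≠ w) (huw : u ≠ w) :
    let x : V → R := Pi.single u 1 - Pi.single v 1 + Pi.single w 1
    x ⬝ᵥ x = 3 := by
  norm_num [dotProduct_add, dotProduct_sub, huv, hvw, huw, huv.symm, hvw.symm, huw.symm]

theorem SimpleGraph.dotProduct_adjMatrix_mulVec_of_induced_path (G : SimpleGraph V)
    [DecidableRel G.Adj] (huv : G.Adj u v) (hvw : G.Adj v w) (huw : ¬ G.Adj u w) :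
    let x : V → R := Pi.single u 1 - Pi.single v 1 + Pi.single w 1
    x ⬝ᵥ (G.adjMatrix R *ᵥ x) = -4 := by
  norm_num [mulVec_add, mulVec_sub, dotProduct_add, dotProduct_sub, add_dotProduct,
    sub_dotProduct, huv, huv.symm, hvw, hvw.symm, huw, G.adj_comm w u]

theorem stmt_11 (n : ℕ) (G : SimpleGraph (Fin n)) [DecidableRel G.Adj]
    (hnotcliques : ¬ ∀ u v w : Fin n, G.Adj u v → G.Adj v w → u ≠ w → G.Adj u w) :
    ∃ μ : ℝ, μ < -1 ∧ ∃ x ≠ 0, (G.adjMatrix ℝ) *ᵥ x = μ • x := by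
  push Not at hnotcliques
  obtain ⟨u, v, w, huv, hvw, huw, hnadj⟩ := hnotcliques
  set x : Fin n → ℝ := Pi.single u 1 - Pi.single v 1 + Pi.single w 1
  have hquad : x ⬝ᵥ (G.adjMatrix ℝ *ᵥ x) = -4 :=
    G.dotProduct_adjMatrix_mulVec_of_induced_path huv hvw hnadj
  have hnorm : x ⬝ᵥ x = 3 :=
    dotProduct_self_single_sub_single_add_single (G.ne_of_adj huv) (G.ne_of_adj hvw) huw
  refine (G.isHermitian_adjMatrix ℝ).exists_eigenvector_of_re_dotProduct_mulVec_lt (x := x) ?_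
  simp only [star_trivial, RCLike.re_to_real, hquad, hnorm]
  norm_num
end

section
/- Let G be a vertex-transitive k-regular graph on an odd number n of vertices. Then every simple eigenvalue of the adjacency matrix of G equals k. -/
/-!
Let `w` span the one-dimensional eigenspace of `τ`. Every automorphism `σ` maps eigenvectors to
eigenvectors, so `w ∘ σ = c • w`, and since `σ` permutes coordinates, `‖w ∘ σ‖ = ‖w‖` forces
`c = ±1`. Hence `|w|` is invariant under all automorphisms, so by vertex-transitivity it is
constant and no entry of `w` vanishes. If `w ∘ σ = -w`, then `σ` maps the vertices where `w < 0`
bijectively onto those where `w > 0`, so the number of vertices is even. For odd `n`, therefore,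
`w` is invariant under all automorphisms, hence constant, and a constant eigenvector of a
`k`-regular graph has eigenvalue `k`.
-/

open Matrix Module End

section

variable {V : Type*} [Fintype V]

theorem eq_one_or_eq_neg_one_of_comp_equiv_eq_smul {α : Type*} [CommRing α] [LinearOrder α]
    [IsStrictOrderedRing α] (σ : V ≃ V) {w : V → α} (hw : w ≠ 0) {c : α}
    (h : w ∘ σ = c • w) : c = 1 ∨ c = -1 := by
  have hnorm : c * c * (w ⬝ᵥ w) = 1 * (w ⬝ᵥ w) :=
    calc c * c * (w ⬝ᵥ w) = c • w ⬝ᵥ c • w := by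
          rw [smul_dotProduct, dotProduct_smul, smul_eq_mul, smul_eq_mul, mul_assoc]
      _ = w ∘ σ ⬝ᵥ w ∘ σ := by rw [h]
      _ = 1 * (w ⬝ᵥ w) := by rw [comp_equiv_dotProduct_comp_equiv, one_mul]
  exact mul_self_eq_one_iff.mp <| mul_right_cancel₀ (dotProduct_self_eq_zero.not.mpr hw) hnorm

theorem even_card_of_comp_equiv_eq_neg {α : Type*} [AddCommGroup α] [LinearOrder α]
    [IsOrderedAddMonoid α] (σ : V ≃ V) {w : V → α} (hw : ∀ v, w v ≠ 0) (h : w ∘ σ = -w) :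
    Even (Fintype.card V) := by
  classical
  have hneg : Finset.univ.filter (fun v => ¬ 0 < w v) =
      (Finset.univ.filter (fun v => 0 < w v)).map σ.symm.toEmbedding := by
    ext v
    have hσv : w (σ v) = -w v := congrFun h v
    simp [← neg_pos (a := w v), ← hσv, (hw v).le_iff_lt]
  refine ⟨(Finset.univ.filter (fun v => 0 < w v)).card, ?_⟩
  rw [← Finset.card_univ, ← Finset.card_filter_add_card_filter_not (fun v => 0 < w v), hneg,
    Finset.card_map]

end

namespace SimpleGraph

variable {V : Type*} {G : SimpleGraph V}

def IsVertexTransitive (G : SimpleGraph V) : Prop := ∀ u v : V, ∃ e : G ≃g G, e u = v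

theorem IsVertexTransitive.apply_eq_of_forall_comp_eq {β : Type*} (hG : G.IsVertexTransitive)
    {f : V → β} (hf : ∀ e : G ≃g G, f ∘ e = f) (u v : V) : f u = f v := by
  obtain ⟨e, rfl⟩ := hG u v
  exact (congrFun (hf e) u).symm

variable [Fintype V] [DecidableRel G.Adj]

theorem adjMatrix_mulVec_comp_iso {α : Type*} [NonAssocSemiring α] (e : G ≃g G) (w : V → α) :
    G.adjMatrix α *ᵥ (w ∘ e) = (G.adjMatrix α *ᵥ w) ∘ e := by
  ext u
  simp only [Function.comp_apply, mulVec, dotProduct]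
  rw [← e.toEquiv.sum_comp (fun x => G.adjMatrix α (e u) x * w x)]
  simp [adjMatrix_apply, e.map_adj_iff]

section Eigenspace

variable {R : Type*} [CommRing R] {τ : R} {w : V → R}

theorem comp_iso_mem_eigenspace (e : G ≃g G)
    (hw : w ∈ eigenspace (mulVecLin (G.adjMatrix R)) τ) :
    w ∘ e ∈ eigenspace (mulVecLin (G.adjMatrix R)) τ := by
  rw [mem_eigenspace_iff, mulVecLin_apply] at hw ⊢
  rw [adjMatrix_mulVec_comp_iso, hw]
  rfl

theorem IsRegularOfDegree.eq_of_constant_mem_eigenspace [IsDomain R] {k : ℕ}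
    (hreg : G.IsRegularOfDegree k) (hw : w ∈ eigenspace (mulVecLin (G.adjMatrix R)) τ)
    (hw0 : w ≠ 0) (hconst : ∀ u v, w u = w v) : τ = k := by
  obtain ⟨u₀, hu₀⟩ := Function.ne_iff.mp hw0
  have hw_eq : w = Function.const V (w u₀) := funext fun u => hconst u u₀
  rw [mem_eigenspace_iff, mulVecLin_apply, hw_eq] at hw
  have hu₀_eq := congrFun hw u₀
  rw [adjMatrix_mulVec_const_apply_of_regular hreg] at hu₀_eq
  exact mul_right_cancel₀ hu₀ hu₀_eq.symm

end Eigenspace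

variable {K : Type*} [Field K] [LinearOrder K] [IsStrictOrderedRing K] {τ : K} {w : V → K}

theorem comp_iso_eq_or_eq_neg_of_finrank_eigenspace_eq_one
    (hsimple : finrank K (eigenspace (mulVecLin (G.adjMatrix K)) τ) = 1)
    (hw : w ∈ eigenspace (mulVecLin (G.adjMatrix K)) τ) (hw0 : w ≠ 0) (e : G ≃g G) :
    w ∘ e = w ∨ w ∘ e = -w := by
  obtain ⟨c, hc⟩ := (finrank_eq_one_iff_of_nonzero' ⟨w, hw⟩ (by simpa using hw0)).mp hsimple
    ⟨w ∘ e, comp_iso_mem_eigenspace e hw⟩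
  have hc : w ∘ e = c • w := by simpa using (congrArg Subtype.val hc).symm
  rcases eq_one_or_eq_neg_one_of_comp_equiv_eq_smul e.toEquiv hw0 hc with rfl | rfl
  · exact Or.inl (by simpa using hc)
  · exact Or.inr (by simpa using hc)

theorem IsVertexTransitive.apply_eq_of_finrank_eigenspace_eq_one (hG : G.IsVertexTransitive)
    (hodd : Odd (Fintype.card V))
    (hsimple : finrank K (eigenspace (mulVecLin (G.adjMatrix K)) τ) = 1)
    (hw : w ∈ eigenspace (mulVecLin (G.adjMatrix K)) τ) (hw0 : w ≠ 0) (u v : V) :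
    w u = w v := by
  have hsign := comp_iso_eq_or_eq_neg_of_finrank_eigenspace_eq_one hsimple hw hw0
  have habs : ∀ u v, |w u| = |w v| := hG.apply_eq_of_forall_comp_eq fun e => by
    ext u
    rcases hsign e with h | h <;>
      simp [show w (e u) = _ from congrFun h u]
  obtain ⟨u₀, hu₀⟩ := Function.ne_iff.mp hw0
  have hne : ∀ u, w u ≠ 0 := fun u => abs_ne_zero.mp (habs u u₀ ▸ abs_ne_zero.mpr hu₀)
  refine hG.apply_eq_of_forall_comp_eq (fun e => (hsign e).resolve_right fun h => ?_) u v
  exact Nat.not_even_iff_odd.mpr hodd (even_card_of_comp_equiv_eq_neg e.toEquiv hne h)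

end SimpleGraph

theorem stmt_15_general (n : ℕ) (hodd : Odd n) (G : SimpleGraph (Fin n)) [DecidableRel G.Adj]
    (htrans : ∀ u v : Fin n, ∃ e : G ≃g G, e u = v)
    (k : ℕ) (hreg : ∀ u, G.degree u = k)
    (A : Matrix (Fin n) (Fin n) ℝ) (hA : A = G.adjMatrix ℝ)
    (τ : ℝ)
    (hsimple : Module.finrank ℝ (Module.End.eigenspace (Matrix.mulVecLin A) τ) = 1) :
    τ = (k : ℝ) := by
  subst hA
  obtain ⟨⟨w, hw⟩, hw_ne, -⟩ := finrank_eq_one_iff'.mp hsimple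
  have hw0 : w ≠ 0 := fun h => hw_ne (Subtype.ext h)
  have hG : G.IsVertexTransitive := htrans
  have hodd' : Odd (Fintype.card (Fin n)) := by rwa [Fintype.card_fin]
  exact SimpleGraph.IsRegularOfDegree.eq_of_constant_mem_eigenspace hreg hw hw0
    (hG.apply_eq_of_finrank_eigenspace_eq_one hodd' hsimple hw hw0)

theorem stmt_15 (n : ℕ) (hodd : Odd n) (G : SimpleGraph (Fin n)) [DecidableRel G.Adj]
    (htrans : ∀ u v : Fin n, ∃ e : G ≃g G, e u = v)
    (k : ℕ) (hreg : ∀ u, G.degree u = k)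
    (A : Matrix (Fin n) (Fin n) ℝ) (hA : A = G.adjMatrix ℝ)
    (τ : ℝ)
    (heig : ∃ w ≠ 0, A *ᵥ w = τ • w)
    (hsimple : Module.finrank ℝ (Module.End.eigenspace (Matrix.mulVecLin A) τ) = 1) :
    τ = (k : ℝ) :=
  stmt_15_general n hodd G htrans k hreg A hA τ hsimple
end

section
/- Let G be a graph with n vertices and e edges, B its n×e unoriented incidence matrix, and r the number of connected components of G that are bipartite. Then rank(B) = n - r over the reals. -/
/-!
The rank of `B` is `n` minus the dimension of the kernel of `Bᵀ`, which consists of the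
vertex functions `x` with `x u + x v = 0` on every edge. The product of two such functions is
constant along edges, hence on components; so `x²` is constant on each component, and where `x`
does not vanish, comparing `x w` with `x v` (which differs from `-x v` as `2 ≠ 0`) two-colours
the component of `v`. Conversely a two-colouring yields a `±1` function supported on its
component. Hence evaluation at one representative per bipartite component identifies the kernel
with functions on those components.
-/

open Matrix

namespace SimpleGraph

variable {V : Type*} {G : SimpleGraph V} {K : Type*} [Field K]

variable (G K) in
def alternatingSubmodule : Submodule K (V → K) where
  carrier := {x | ∀ ⦃u v⦄, G.Adj u v → x u + x v = 0}
  add_mem' {x y} hx hy u v h := by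
    simp only [Pi.add_apply]
    linear_combination hx h + hy h
  zero_mem' _ _ _ := by simp
  smul_mem' c x hx u v h := by
    simp only [Pi.smul_apply, smul_eq_mul]
    linear_combination c * hx h

theorem mem_alternatingSubmodule {x : V → K} :
    x ∈ G.alternatingSubmodule K ↔ ∀ ⦃u v⦄, G.Adj u v → x u + x v = 0 := Iff.rfl

theorem Reachable.mul_eq_mul_of_mem_alternatingSubmodule {x y : V → K}
    (hx : x ∈ G.alternatingSubmodule K) (hy : y ∈ G.alternatingSubmodule K) {u v : V}
    (huv : G.Reachable u v) : x u * y u = x v * y v := by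
  obtain ⟨p⟩ := huv
  induction p with
  | nil => rfl
  | @cons a b _ hab _ ih => rw [← ih]; linear_combination y a * hx hab - x b * hy hab

theorem isBipartite_induce_supp_of_mem_alternatingSubmodule [NeZero (2 : K)] {x : V → K}
    (hx : x ∈ G.alternatingSubmodule K) {v : V} (hv : x v ≠ 0) :
    (G.induce (G.connectedComponentMk v).supp).IsBipartite := by
  classical
  have hpm {w : V} (hw : w ∈ (G.connectedComponentMk v).supp) : x w = x v ∨ x w = -x v :=
    mul_self_eq_mul_self_iff.1 <|
      (ConnectedComponent.exact hw).mul_eq_mul_of_mem_alternatingSubmodule hx hx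
  have hv' : x v ≠ -x v := fun h => hv <|
    (mul_eq_zero.1 (by linear_combination h : (2 : K) * x v = 0)).resolve_left two_ne_zero
  have := (Coloring.mk (G := G.induce (G.connectedComponentMk v).supp)
    (fun w => decide (x w = x v)) fun {a b} hab => ?_).colorable
  · simpa using this
  have hba : x b = -x a := eq_neg_of_add_eq_zero_right (hx (by simpa using hab))
  rcases hpm a.2 with h | h <;> simp [hba, h, hv'.symm]

theorem exists_mem_alternatingSubmodule_of_isBipartite {c : G.ConnectedComponent}
    (hc : (G.induce c.supp).IsBipartite) {v₀ : V} (hv₀ : v₀ ∈ c.supp) :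
    ∃ s ∈ G.alternatingSubmodule K, s v₀ = 1 ∧ ∀ v ∉ c.supp, s v = 0 := by
  classical
  obtain ⟨C⟩ := hc
  refine ⟨fun v => if hv : v ∈ c.supp then (if C ⟨v, hv⟩ = C ⟨v₀, hv₀⟩ then 1 else -1) else 0,
    fun u v huv => ?_, by simp [hv₀], fun v hv => dif_neg hv⟩
  by_cases hu : u ∈ c.supp
  · have hv : v ∈ c.supp := (c.mem_supp_congr_adj huv).1 hu
    have hne : C ⟨u, hu⟩ ≠ C ⟨v, hv⟩ := C.valid (by simpa using huv)
    simp only [dif_pos hu, dif_pos hv]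
    generalize C ⟨u, hu⟩ = a at hne
    generalize C ⟨v, hv⟩ = b at hne
    generalize C ⟨v₀, hv₀⟩ = o
    fin_cases a <;> fin_cases b <;> fin_cases o <;> simp_all
  · have hv : v ∉ c.supp := fun hv => hu ((c.mem_supp_congr_adj huv).2 hv)
    simp only [dif_neg hu, dif_neg hv, add_zero]

theorem finrank_alternatingSubmodule [Finite V] [NeZero (2 : K)] :
    Module.finrank K (G.alternatingSubmodule K) =
      Nat.card {c : G.ConnectedComponent // (G.induce c.supp).IsBipartite} := by
  classical
  let S := {c : G.ConnectedComponent // (G.induce c.supp).IsBipartite}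
  have : Fintype S := Fintype.ofFinite S
  let evalAtRep : G.alternatingSubmodule K →ₗ[K] (S → K) :=
    { toFun x c := x.1 c.1.out
      map_add' _ _ := rfl
      map_smul' _ _ := rfl }
  have hinj : Function.Injective evalAtRep := by
    refine (injective_iff_map_eq_zero _).2 fun x hx => Subtype.ext <| funext fun v => ?_
    by_contra hv
    have hb := isBipartite_induce_supp_of_mem_alternatingSubmodule x.2 hv
    have hrep : x.1 (G.connectedComponentMk v).out = 0 := congrFun hx ⟨_, hb⟩
    have hsq := (ConnectedComponent.exact (G.connectedComponentMk v).out_eq.symm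
      ).mul_eq_mul_of_mem_alternatingSubmodule x.2 x.2
    exact hv (by simpa [hrep] using hsq)
  have hsurj : Function.Surjective evalAtRep := by
    choose s hs hs_rep hs_supp using fun c : S =>
      exists_mem_alternatingSubmodule_of_isBipartite (K := K) c.2 c.1.out_eq
    have hsingle (c : S) : evalAtRep ⟨s c, hs c⟩ = fun c' => if c = c' then 1 else 0 := by
      funext c'
      by_cases h : c = c'
      · rw [if_pos h, ← h]
        exact hs_rep c
      · simp only [if_neg h]
        exact hs_supp c _ fun h' => h (Subtype.ext (c'.1.out_eq.symm.trans h')).symm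
    intro a
    refine ⟨∑ c, a c • ⟨s c, hs c⟩, ?_⟩
    simp only [map_sum, map_smul, hsingle]
    exact (pi_eq_sum_univ a).symm
  rw [(LinearEquiv.ofBijective evalAtRep ⟨hinj, hsurj⟩).finrank_eq,
    Module.finrank_fintype_fun_eq_card, Nat.card_eq_fintype_card]

section Incidence

variable [Fintype V] [DecidableEq V] {B : Matrix V G.edgeSet K}

theorem transpose_mulVec_apply_of_incidence
    (hB : ∀ i e, B i e = if i ∈ (e : Sym2 V) then 1 else 0) (x : V → K) {u v : V}
    (huv : G.Adj u v) : (Bᵀ *ᵥ x) ⟨s(u, v), huv⟩ = x u + x v := by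
  have : Finset.univ.filter (· ∈ s(u, v)) = {u, v} := by ext; simp [eq_comm]
  simp only [mulVec, dotProduct, transpose_apply, hB, ite_mul, one_mul, zero_mul]
  rw [← Finset.sum_filter, this, Finset.sum_pair huv.ne]

theorem ker_mulVecLin_transpose_of_incidence
    (hB : ∀ i e, B i e = if i ∈ (e : Sym2 V) then 1 else 0) :
    LinearMap.ker Bᵀ.mulVecLin = G.alternatingSubmodule K := by
  ext x
  simp only [LinearMap.mem_ker, mulVecLin_apply, mem_alternatingSubmodule]
  refine ⟨fun h u v huv => ?_, fun h => funext fun ⟨e, he⟩ => ?_⟩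
  · rw [← transpose_mulVec_apply_of_incidence hB x huv, h, Pi.zero_apply]
  · induction e using Sym2.ind with
    | _ u v => exact (transpose_mulVec_apply_of_incidence hB x he).trans (h he)

theorem rank_eq_card_sub_card_bipartite_of_incidence [Fintype G.edgeSet] [NeZero (2 : K)]
    (hB : ∀ i e, B i e = if i ∈ (e : Sym2 V) then 1 else 0) :
    B.rank = Fintype.card V -
      Nat.card {c : G.ConnectedComponent // (G.induce c.supp).IsBipartite} := by
  have := LinearMap.finrank_range_add_finrank_ker Bᵀ.mulVecLin
  rw [ker_mulVecLin_transpose_of_incidence hB, finrank_alternatingSubmodule,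
    Module.finrank_fintype_fun_eq_card, ← rank, rank_transpose] at this
  omega

end Incidence

end SimpleGraph

theorem stmt_17 (n : ℕ) (G : SimpleGraph (Fin n)) [DecidableRel G.Adj]
    (B : Matrix (Fin n) G.edgeSet ℝ)
    (hB : ∀ (i : Fin n) (e : G.edgeSet), B i e = if i ∈ (e : Sym2 (Fin n)) then 1 else 0)
    (r : ℕ)
    (hr : r = Nat.card {c : G.ConnectedComponent //
        (G.induce {v | G.connectedComponentMk v = c}).Colorable 2}) :
    B.rank = n - r := by
  rw [SimpleGraph.rank_eq_card_sub_card_bipartite_of_incidence hB, Fintype.card_fin, hr]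
  rfl
end
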